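/- arXiv:2112.00603 — 6 statements merged into one kernel-verified Lean document; each statement's English description precedes it below -/
import Mathlib

section
/- Let G be a group and A a set. Let τ, σ : A^G → A^G be cellular automata with local defining maps μ, η : A^M → A for a common finite memory set M ⊆ G with 1_G ∈ M. Let τ_M⁺ : A^{M²} → A^M denote the induced local map given by τ_M⁺(x)(g) = μ((g⁻¹x)|_M) for x ∈ A^{M²} and g ∈ M, and let π : A^{M²} → A be the projection x ↦ x(1_G). Then σ ∘ τ = id if and only if η ∘ τ_M⁺ = π. -/
open Pointwise

theorem stmt_0 {G A : Type*} [Group G] (M : Set G) (hMfin : M.Finite)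
    (h1 : (1 : G) ∈ M) (μ η : (M → A) → A) (τ σ : (G → A) → (G → A))
    (hτ : ∀ (c : G → A) (g : G), τ c g = μ (fun m : M => c (g * m)))
    (hσ : ∀ (c : G → A) (g : G), σ c g = η (fun m : M => c (g * m))) :
    σ ∘ τ = id ↔
      ∀ x : ↥(M * M) → A,
        η (fun g : M => μ (fun m : M => x ⟨g * m, Set.mul_mem_mul g.2 m.2⟩)) =
          x ⟨1, by simpa using Set.mul_mem_mul h1 h1⟩ := by
  classical
  have h11 : (1 : G) ∈ M * M := by simpa using Set.mul_mem_mul h1 h1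
  constructor
  · intro h x
    set c : G → A := fun g => if hg : g ∈ M * M then x ⟨g, hg⟩ else x ⟨1, h11⟩ with hc
    have key := congrFun (congrFun h c) 1
    simp only [Function.comp_apply, id_eq] at key
    rw [hσ, ] at key
    have : (fun m : M => τ c (1 * m)) =
        fun g : M => μ (fun m : M => x ⟨g * m, Set.mul_mem_mul g.2 m.2⟩) := by
      funext g
      rw [hτ]
      congr 1
      funext m
      have hmem : (g : G) * m ∈ M * M := Set.mul_mem_mul g.2 m.2
      simp [hc, one_mul, hmem]
    rw [this] at key
    rw [key]
    simp [hc, h11]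
  · intro h
    funext c g
    simp only [Function.comp_apply, id_eq]
    rw [hσ]
    have := h (fun p => c (g * p))
    convert this using 2
    · funext m
      rw [hτ]
      congr 1
      funext m'
      simp [mul_assoc]
    · simp
end

section
/- Let G be a group and A a set. Let τ, σ : A^G → A^G be cellular automata with local defining maps μ, η : A^M → A for a common finite memory set M ⊆ G with 1_G ∈ M. With τ_M⁺, σ_M⁺ : A^{M²} → A^M the induced local maps and π : A^{M²} → A the projection x ↦ x(1_G), one has τ ∘ σ = id if and only if μ ∘ σ_M⁺ = π. -/
open Pointwise

theorem stmt_1 {G A : Type*} [Group G] (M : Set G) (hMfin : M.Finite)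
    (h1 : (1 : G) ∈ M) (μ η : (M → A) → A) (τ σ : (G → A) → (G → A))
    (hτ : ∀ (c : G → A) (g : G), τ c g = μ (fun m : M => c (g * m)))
    (hσ : ∀ (c : G → A) (g : G), σ c g = η (fun m : M => c (g * m))) :
    τ ∘ σ = id ↔
      ∀ x : ↥(M * M) → A,
        μ (fun g : M => η (fun m : M => x ⟨g * m, Set.mul_mem_mul g.2 m.2⟩)) =
          x ⟨1, by simpa using Set.mul_mem_mul h1 h1⟩ := by
  classical
  constructor
  · intro h x
    set c : G → A := fun g =>
      if hg : g ∈ M * M then x ⟨g, hg⟩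
      else x ⟨1, by simpa using Set.mul_mem_mul h1 h1⟩ with hcdef
    have hc : ∀ (g : G) (hg : g ∈ M * M), c g = x ⟨g, hg⟩ := fun g hg => dif_pos hg
    have key := congrFun (congrFun h c) 1
    simp only [Function.comp_apply, id_eq] at key
    rw [hτ] at key
    have h2 : (fun m : M => σ c (1 * (m : G))) =
        fun m : M => η (fun m' : M => x ⟨m * m', Set.mul_mem_mul m.2 m'.2⟩) := by
      funext m
      rw [hσ]
      congr 1
      funext m'
      rw [one_mul]
      exact hc _ (Set.mul_mem_mul m.2 m'.2)
    rw [h2] at key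
    rw [key]
    exact hc 1 (by simpa using Set.mul_mem_mul h1 h1)
  · intro h
    funext c g
    simp only [Function.comp_apply, id_eq]
    rw [hτ]
    have key := h (fun p : ↥(M * M) => c (g * p))
    simp only at key
    have h2 : (fun m : M => σ c (g * (m : G))) =
        fun m : M => η (fun m' : M => c (g * ((m : G) * m'))) := by
      funext m
      rw [hσ]
      congr 1
      funext m'
      rw [mul_assoc]
    rw [h2, key, mul_one]
end

section
/- Let G be a group, A a set, and τ : A^G → A^G a cellular automaton with local defining map μ : A^M → A for a finite memory set M ⊆ G. Let H be the subgroup of G generated by M, and let τ_H : A^H → A^H be the cellular automaton over H with the same local defining map μ. Then τ is injective if and only if τ_H is injective. -/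
/-!
If `M ⊆ H`, the value of `τ c` on a left coset `gH` only depends on `c` restricted to `gH`, and
there it is computed by `τ_H` after translating the coset back to `H`; so injectivity of `τ_H`
gives injectivity of `τ` coset by coset. Conversely, extending configurations on `H` by a
constant outside `H` embeds `τ_H` into `τ`: outside `H` the image is the constant
`μ (fun _ => a)` for both extensions, because `gm ∉ H` for `g ∉ H` and `m ∈ M`.
-/

namespace CellularAutomaton

variable {G A : Type*} [Group G] {M : Set G}

def globalMap (M : Set G) (μ : (M → A) → A) (c : G → A) (g : G) : A :=
  μ fun m => c (g * m)

def restrictMap (H : Subgroup G) (hM : M ⊆ H) (μ : (M → A) → A) (c : H → A) (h : H) : A :=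
  μ fun m => c (h * ⟨m, hM m.2⟩)

open scoped Classical in
noncomputable def extendConst (H : Subgroup G) (a : A) (c : H → A) (g : G) : A :=
  if hg : g ∈ H then c ⟨g, hg⟩ else a

variable {H : Subgroup G} (μ : (M → A) → A)

theorem globalMap_mul_coe (hM : M ⊆ H) (c : G → A) (g : G) (h : H) :
    globalMap M μ c (g * h) = restrictMap H hM μ (fun x : H => c (g * x)) h := by
  simp only [globalMap, restrictMap, Subgroup.coe_mul, mul_assoc]

theorem globalMap_extendConst_of_mem (hM : M ⊆ H) (a : A) (c : H → A) {g : G} (hg : g ∈ H) :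
    globalMap M μ (extendConst H a c) g = restrictMap H hM μ c ⟨g, hg⟩ := by
  refine congrArg μ (funext fun m => ?_)
  exact dif_pos (mul_mem hg (hM m.2))

theorem globalMap_extendConst_of_notMem (hM : M ⊆ H) (a : A) (c : H → A) {g : G} (hg : g ∉ H) :
    globalMap M μ (extendConst H a c) g = μ fun _ => a := by
  refine congrArg μ (funext fun m => ?_)
  exact dif_neg fun hgm => hg ((Subgroup.mul_mem_cancel_right H (hM m.2)).mp hgm)

theorem injective_globalMap_of_injective_restrictMap (hM : M ⊆ H)
    (hinj : (restrictMap H hM μ).Injective) : (globalMap M μ).Injective := by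
  intro c₁ c₂ heq
  funext g
  have hcoset : (fun x : H => c₁ (g * x)) = fun x : H => c₂ (g * x) :=
    hinj <| funext fun h => by rw [← globalMap_mul_coe, ← globalMap_mul_coe, heq]
  simpa using congrFun hcoset 1

theorem injective_restrictMap_of_injective_globalMap (hM : M ⊆ H)
    (hinj : (globalMap M μ).Injective) : (restrictMap H hM μ).Injective := by
  intro c₁ c₂ heq
  -- Any constant works; `c₁ 1` only serves as an element of the possibly empty `A`.
  have hext :
      globalMap M μ (extendConst H (c₁ 1) c₁) = globalMap M μ (extendConst H (c₁ 1) c₂) := by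
    funext g
    by_cases hg : g ∈ H
    · rw [globalMap_extendConst_of_mem μ hM _ _ hg, globalMap_extendConst_of_mem μ hM _ _ hg,
        heq]
    · rw [globalMap_extendConst_of_notMem μ hM _ _ hg,
        globalMap_extendConst_of_notMem μ hM _ _ hg]
  funext h
  simpa [extendConst] using congrFun (hinj hext) h

theorem injective_globalMap_iff_injective_restrictMap (hM : M ⊆ H) :
    (globalMap M μ).Injective ↔ (restrictMap H hM μ).Injective :=
  ⟨injective_restrictMap_of_injective_globalMap μ hM,
    injective_globalMap_of_injective_restrictMap μ hM⟩

end CellularAutomaton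

open CellularAutomaton in
theorem stmt_7_general {G A : Type*} [Group G] (M : Set G)
    (μ : (M → A) → A) (τ : (G → A) → (G → A))
    (hτ : ∀ (c : G → A) (g : G), τ c g = μ (fun m : M => c (g * m)))
    (τH : (↥(Subgroup.closure M) → A) → (↥(Subgroup.closure M) → A))
    (hτH : ∀ (c : ↥(Subgroup.closure M) → A) (h : ↥(Subgroup.closure M)),
      τH c h = μ (fun m : M => c (h * ⟨m.1, Subgroup.subset_closure m.2⟩))) :
    Function.Injective τ ↔ Function.Injective τH := by
  obtain rfl : τ = globalMap M μ := funext fun c => funext (hτ c)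
  obtain rfl : τH = restrictMap (Subgroup.closure M) Subgroup.subset_closure μ :=
    funext fun c => funext (hτH c)
  exact injective_globalMap_iff_injective_restrictMap μ Subgroup.subset_closure

theorem stmt_7 {G A : Type*} [Group G] (M : Set G) (hMfin : M.Finite)
    (μ : (M → A) → A) (τ : (G → A) → (G → A))
    (hτ : ∀ (c : G → A) (g : G), τ c g = μ (fun m : M => c (g * m)))
    (τH : (↥(Subgroup.closure M) → A) → (↥(Subgroup.closure M) → A))
    (hτH : ∀ (c : ↥(Subgroup.closure M) → A) (h : ↥(Subgroup.closure M)),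
      τH c h = μ (fun m : M => c (h * ⟨m.1, Subgroup.subset_closure m.2⟩))) :
    Function.Injective τ ↔ Function.Injective τH :=
  stmt_7_general M μ τ hτ τH hτH
end

section
/- Let G be a group, A a set, and τ : A^G → A^G a cellular automaton with memory set M ⊆ G. Let H be the subgroup generated by M and τ_H : A^H → A^H the restriction cellular automaton with the same local defining map. Then τ is surjective if and only if τ_H is surjective. -/
/-!
Translating a configuration by `g` commutes with the automaton, so `τ_H` computes `τ` on every
left coset `gH`. Restricting a preimage under `τ` to `H` therefore gives a preimage under `τ_H`;
conversely, since the memory set lies in `H`, the value of `τ` at `g` only reads the coset `gH`,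
so preimages under `τ_H` chosen independently on each coset glue to a preimage under `τ`.
-/

namespace CellularAutomaton

open Function

variable {G A : Type*} [Group G] {M : Set G}

/-- The configuration `(g⁻¹c)|_M` of the paper is `m ↦ c (g * m)`. -/
def global (μ : (M → A) → A) (c : G → A) (g : G) : A :=
  μ fun m => c (g * m)

def restrict (μ : (M → A) → A) (H : Subgroup G) (hMH : M ⊆ H) (c : H → A) (h : H) : A :=
  μ fun m => c (h * ⟨m, hMH m.2⟩)

variable (μ : (M → A) → A) {H : Subgroup G} (hMH : M ⊆ H)

theorem restrict_comp_mul_left (c : G → A) (g : G) :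
    restrict μ H hMH (fun h => c (g * h)) = fun h : H => global μ c (g * h) := by
  funext h
  simp only [restrict, global, Subgroup.coe_mul, mul_assoc]

theorem surjective_restrict_of_surjective (hτ : Surjective (global μ)) :
    Surjective (restrict μ H hMH) := by
  intro d
  have : Nonempty A := ⟨d 1⟩
  obtain ⟨e, rfl⟩ := Subtype.val_injective.surjective_comp_right d
  obtain ⟨c, rfl⟩ := hτ e
  exact ⟨fun h => c h, by simpa [comp_def] using restrict_comp_mul_left μ hMH c 1⟩

noncomputable def glueCosets (C : G ⧸ H → H → A) (g : G) : A :=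
  C g ⟨(g : G ⧸ H).out⁻¹ * g, QuotientGroup.eq.mp (QuotientGroup.out_eq' (g : G ⧸ H))⟩

theorem glueCosets_out_mul (C : G ⧸ H → H → A) (q : G ⧸ H) (h : H) :
    glueCosets C (q.out * h) = C q h := by
  have hq : ((q.out * h : G) : G ⧸ H) = q := by
    rw [QuotientGroup.mk_mul_of_mem _ h.2, QuotientGroup.out_eq']
  unfold glueCosets
  congr 1
  ext
  simp [hq]

theorem exists_out_mul_eq (g : G) : ∃ q : G ⧸ H, ∃ h : H, q.out * h = g := by
  obtain ⟨h, hh⟩ := QuotientGroup.mk_out_eq_mul H g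
  exact ⟨g, h⁻¹, by rw [hh, Subgroup.coe_inv, mul_inv_cancel_right]⟩

theorem surjective_of_surjective_restrict (hτH : Surjective (restrict μ H hMH)) :
    Surjective (global μ) := by
  intro e
  choose C hC using fun q : G ⧸ H => hτH fun h => e (q.out * h)
  refine ⟨glueCosets C, funext fun g => ?_⟩
  obtain ⟨q, h, rfl⟩ := exists_out_mul_eq (H := H) g
  calc global μ (glueCosets C) (q.out * h)
      = restrict μ H hMH (fun x => glueCosets C (q.out * x)) h :=
        (congrFun (restrict_comp_mul_left μ hMH _ _) h).symm
    _ = restrict μ H hMH (C q) h := by simp_rw [glueCosets_out_mul]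
    _ = e (q.out * h) := congrFun (hC q) h

theorem surjective_restrict_iff :
    Surjective (restrict μ H hMH) ↔ Surjective (global μ) :=
  ⟨surjective_of_surjective_restrict μ hMH, surjective_restrict_of_surjective μ hMH⟩

end CellularAutomaton

open CellularAutomaton in
theorem stmt_8_general {G A : Type*} [Group G] (M : Set G)
    (μ : (M → A) → A) (τ : (G → A) → (G → A))
    (hτ : ∀ (c : G → A) (g : G), τ c g = μ (fun m : M => c (g * m)))
    (τH : (↥(Subgroup.closure M) → A) → (↥(Subgroup.closure M) → A))
    (hτH : ∀ (c : ↥(Subgroup.closure M) → A) (h : ↥(Subgroup.closure M)),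
      τH c h = μ (fun m : M => c (h * ⟨m.1, Subgroup.subset_closure m.2⟩))) :
    Function.Surjective τ ↔ Function.Surjective τH := by
  obtain rfl : τ = global μ := funext₂ hτ
  obtain rfl : τH = restrict μ _ Subgroup.subset_closure := funext₂ hτH
  exact (surjective_restrict_iff μ _).symm

theorem stmt_8 {G A : Type*} [Group G] (M : Set G) (hMfin : M.Finite)
    (μ : (M → A) → A) (τ : (G → A) → (G → A))
    (hτ : ∀ (c : G → A) (g : G), τ c g = μ (fun m : M => c (g * m)))
    (τH : (↥(Subgroup.closure M) → A) → (↥(Subgroup.closure M) → A))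
    (hτH : ∀ (c : ↥(Subgroup.closure M) → A) (h : ↥(Subgroup.closure M)),
      τH c h = μ (fun m : M => c (h * ⟨m.1, Subgroup.subset_closure m.2⟩))) :
    Function.Surjective τ ↔ Function.Surjective τH :=
  stmt_8_general M μ τ hτ τH hτH
end

section
/- Let G be an LEF-group, A a group that is Hopfian or co-Hopfian as a group such that every finite power A^n is also Hopfian (respectively co-Hopfian). Let σ, τ : A^G → A^G be cellular automata whose local defining maps A^M → A are group homomorphisms. If σ ∘ τ = id then τ ∘ σ = id. -/
open Pointwise

lemma transfer_aux {A F : Type*} [Group A] [Group F] [Finite F]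
    (hA : (∀ (n : ℕ) (f : (Fin n → A) →* (Fin n → A)),
            Function.Surjective f → Function.Bijective f) ∨
          (∀ (n : ℕ) (f : (Fin n → A) →* (Fin n → A)),
            Function.Injective f → Function.Bijective f))
    (T S : (F → A) →* (F → A)) (hST : ∀ x, S (T x) = x) : ∀ x, T (S x) = x := by
  set n := Nat.card F with hn
  let e : F ≃ Fin n := Finite.equivFin F
  let me : (F → A) ≃* (Fin n → A) := MulEquiv.arrowCongr e (MulEquiv.refl A)
  rcases hA with hA | hA
  · -- Hopfian case: S is surjective, hence bijective; use injectivity of S.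
    have hSsurj : Function.Surjective S := fun x => ⟨T x, hST x⟩
    let S' : (Fin n → A) →* (Fin n → A) :=
      (me.toMonoidHom.comp S).comp me.symm.toMonoidHom
    have hS'surj : Function.Surjective S' := by
      intro y
      obtain ⟨x, hx⟩ := hSsurj (me.symm y)
      exact ⟨me x, by simp [S', hx]⟩
    have hbij := hA n S' hS'surj
    have hSinj : Function.Injective S := by
      intro a b hab
      have : S' (me a) = S' (me b) := by simp [S', hab]
      have := hbij.injective this
      simpa using me.injective this
    intro x
    exact hSinj (by rw [hST])
  · -- co-Hopfian case: T is injective, hence bijective; use surjectivity of T.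
    have hTinj : Function.Injective T := fun a b hab => by
      rw [← hST a, hab, hST]
    let T' : (Fin n → A) →* (Fin n → A) :=
      (me.toMonoidHom.comp T).comp me.symm.toMonoidHom
    have hT'inj : Function.Injective T' := by
      intro a b hab
      have : T (me.symm a) = T (me.symm b) := by
        apply me.injective; simpa [T'] using hab
      simpa using congrArg me (hTinj this)
    have hbij := hA n T' hT'inj
    have hTsurj : Function.Surjective T := by
      intro x
      obtain ⟨y, hy⟩ := hbij.surjective (me x)
      refine ⟨me.symm y, ?_⟩
      have : me (T (me.symm y)) = me x := by simpa [T'] using hy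
      exact me.injective this
    intro x
    obtain ⟨y, rfl⟩ := hTsurj x
    rw [hST]

def GroupEmbeddable {G : Type*} [Group G] (A : Set G) (H : Type*) [Group H] : Prop :=
  ∃ φ : G → H, Set.InjOn φ A ∧ ∀ a ∈ A, ∀ b ∈ A, a * b ∈ A → φ (a * b) = φ a * φ b

def IsLEF (G : Type*) [Group G] : Prop :=
  ∀ A : Set G, A.Finite → ∃ (F : Type) (_ : Group F), Finite F ∧ GroupEmbeddable A F

theorem stmt_16 {G A : Type*} [Group G] [Group A] (hG : IsLEF G)
    (hA : (∀ (n : ℕ) (f : (Fin n → A) →* (Fin n → A)),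
            Function.Surjective f → Function.Bijective f) ∨
          (∀ (n : ℕ) (f : (Fin n → A) →* (Fin n → A)),
            Function.Injective f → Function.Bijective f))
    (τ σ : (G → A) → (G → A))
    (M : Set G) (hMfin : M.Finite) (μ : (M → A) →* A)
    (hτ : ∀ (c : G → A) (g : G), τ c g = μ (fun m : M => c (g * m)))
    (N : Set G) (hNfin : N.Finite) (η : (N → A) →* A)
    (hσ : ∀ (c : G → A) (g : G), σ c g = η (fun m : N => c (g * m)))
    (h : σ ∘ τ = id) : τ ∘ σ = id := by
  classical
  -- The finite set K
  set K : Set G := insert 1 (M ∪ N ∪ M * N ∪ N * M) with hK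
  have hKfin : K.Finite := by
    apply Set.Finite.insert
    exact (((hMfin.union hNfin).union (hMfin.mul hNfin)).union (hNfin.mul hMfin))
  obtain ⟨F, hFgrp, hFfin, φ, hinj, hmul⟩ := hG K hKfin
  -- membership lemmas
  have h1K : (1 : G) ∈ K := Set.mem_insert 1 _
  have hMK : ∀ m ∈ M, m ∈ K := fun m hm =>
    Set.mem_insert_iff.mpr (Or.inr (by left; left; left; exact hm))
  have hNK : ∀ n ∈ N, n ∈ K := fun n hn =>
    Set.mem_insert_iff.mpr (Or.inr (by left; left; right; exact hn))
  have hMNK : ∀ m ∈ M, ∀ n ∈ N, m * n ∈ K := fun m hm n hn =>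
    Set.mem_insert_iff.mpr (Or.inr (by left; right; exact Set.mul_mem_mul hm hn))
  have hNMK : ∀ n ∈ N, ∀ m ∈ M, n * m ∈ K := fun n hn m hm =>
    Set.mem_insert_iff.mpr (Or.inr (by right; exact Set.mul_mem_mul hn hm))
  -- φ 1 = 1
  have hφ1 : φ 1 = 1 := by
    have := hmul 1 h1K 1 h1K (by simpa using h1K)
    rw [mul_one] at this
    exact mul_left_cancel (by rw [← this, mul_one])
  -- transported cellular automata on F
  let T : (F → A) →* (F → A) :=
    { toFun := fun d f => μ (fun m : M => d (f * φ m))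
      map_one' := by funext f; exact map_one μ
      map_mul' := by intro a b; funext f; exact map_mul μ _ _ }
  let S : (F → A) →* (F → A) :=
    { toFun := fun d f => η (fun n : N => d (f * φ n))
      map_one' := by funext f; exact map_one η
      map_mul' := by intro a b; funext f; exact map_mul η _ _ }
  -- S ∘ T = id
  have hST : ∀ d, S (T d) = d := by
    intro d
    funext f
    show η (fun n : N => μ (fun m : M => d (f * φ n * φ m))) = d f
    set c : G → A := fun x => d (f * φ x) with hc
    have hcomp : (fun n : N => μ (fun m : M => d (f * φ n * φ m)))
        = fun n : N => μ (fun m : M => c ((n : G) * m)) := by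
      funext n
      congr 1
      funext m
      rw [hc]
      simp only
      rw [mul_assoc, ← hmul n (hNK n n.2) m (hMK m m.2) (hNMK n n.2 m m.2)]
    rw [hcomp]
    have hid : σ (τ c) 1 = c 1 := by
      have := congrFun (congrFun h c) 1
      simpa using this
    rw [hσ (τ c) 1] at hid
    simp only [hτ, one_mul] at hid
    have : c 1 = d f := by rw [hc]; simp [hφ1]
    rw [← this, ← hid]
  have hTS := transfer_aux hA T S hST
  -- conclude
  funext c
  funext g
  show τ (σ c) g = c g
  -- define the configuration d on F
  set d : F → A := fun f =>
    if hf : ∃ k, k ∈ K ∧ φ k = f then c (g * hf.choose) else 1 with hd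
  have hdval : ∀ k ∈ K, d (φ k) = c (g * k) := by
    intro k hk
    have hf : ∃ k', k' ∈ K ∧ φ k' = φ k := ⟨k, hk, rfl⟩
    rw [hd]
    simp only [dif_pos hf]
    rw [hinj hf.choose_spec.1 hk hf.choose_spec.2]
  have key := congrFun (hTS d) 1
  show _ = c g
  rw [hτ (σ c) g]
  have hlhs : (fun m : M => σ c (g * m)) =
      fun m : M => η (fun n : N => d (1 * φ m * φ n)) := by
    funext m
    rw [hσ]
    congr 1
    funext n
    rw [one_mul, ← hmul m (hMK m m.2) n (hNK n n.2) (hMNK m m.2 n n.2),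
      hdval _ (hMNK m m.2 n n.2), mul_assoc]
  rw [hlhs]
  have : T (S d) 1 = μ (fun m : M => η (fun n : N => d (1 * φ m * φ n))) := rfl
  rw [← this, key]
  have : (1 : F) = φ 1 := hφ1.symm
  rw [this, hdval 1 h1K, mul_one]
end

section
/- Let G be an LEF-group, R a commutative ring, and A a finitely generated R-module. If σ, τ : A^G → A^G are cellular automata with R-linear local defining maps and σ ∘ τ = id, then τ ∘ σ = id. -/
open scoped Pointwise

theorem stmt_18 {G : Type*} [Group G] {R A : Type*} [CommRing R] [AddCommGroup A]
    [Module R A] [Module.Finite R A] (hG : IsLEF G)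
    (τ σ : (G → A) → (G → A))
    (M : Set G) (hMfin : M.Finite) (μ : (M → A) →ₗ[R] A)
    (hτ : ∀ (c : G → A) (g : G), τ c g = μ (fun m : M => c (g * m)))
    (N : Set G) (hNfin : N.Finite) (η : (N → A) →ₗ[R] A)
    (hσ : ∀ (c : G → A) (g : G), σ c g = η (fun m : N => c (g * m)))
    (h : σ ∘ τ = id) : τ ∘ σ = id := by
  classical
  -- It suffices to prove the identity at the point 1 for all configurations.
  have key : ∀ c : G → A, τ (σ c) 1 = c 1 := by
    intro c
    -- the finite window
    set A₀ : Set G := ({1} : Set G) ∪ M ∪ N ∪ M * N ∪ N * M with hA₀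
    have hA₀fin : A₀.Finite := by
      refine (((((Set.finite_singleton 1).union hMfin).union hNfin).union
        (hMfin.mul hNfin)).union (hNfin.mul hMfin))
    obtain ⟨F, _, hFfin, φ, hinj, hmul⟩ := hG A₀ hA₀fin
    have h1A : (1 : G) ∈ A₀ := by simp [hA₀]
    have hMA : ∀ m ∈ M, m ∈ A₀ := fun m hm => by simp [hA₀, hm]
    have hNA : ∀ n ∈ N, n ∈ A₀ := fun n hn => by simp [hA₀, hn]
    have hMNA : ∀ m ∈ M, ∀ n ∈ N, m * n ∈ A₀ := fun m hm n hn => by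
      have : m * n ∈ M * N := Set.mul_mem_mul hm hn
      simp [hA₀, this]
    have hNMA : ∀ n ∈ N, ∀ m ∈ M, n * m ∈ A₀ := fun n hn m hm => by
      have : n * m ∈ N * M := Set.mul_mem_mul hn hm
      simp [hA₀, this]
    have hφ1 : φ 1 = 1 := by
      have := hmul 1 h1A 1 h1A (by simpa using h1A)
      simp only [mul_one] at this
      exact (mul_left_cancel (a := φ 1) (by rw [mul_one, ← this])).symm
    -- induced linear cellular automata on F
    set T : (F → A) →ₗ[R] (F → A) :=
      LinearMap.pi (fun f => μ ∘ₗ LinearMap.funLeft R A (fun m : M => f * φ m)) with hT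
    set S : (F → A) →ₗ[R] (F → A) :=
      LinearMap.pi (fun f => η ∘ₗ LinearMap.funLeft R A (fun n : N => f * φ n)) with hS
    have hTapp : ∀ (x : F → A) (f : F), T x f = μ (fun m : M => x (f * φ m)) := by
      intro x f; rfl
    have hSapp : ∀ (x : F → A) (f : F), S x f = η (fun n : N => x (f * φ n)) := by
      intro x f; rfl
    -- S ∘ T = id
    have hST : ∀ x : F → A, S (T x) = x := by
      intro x
      funext f
      set d : G → A := fun g => x (f * φ g) with hd
      have hσταid : σ (τ d) 1 = d 1 := by
        have := congrFun h d
        simpa using congrFun this 1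
      calc S (T x) f = η (fun n : N => μ (fun m : M => x (f * φ n * φ m))) := by rw [hSapp]; congr 1
            _ = η (fun n : N => μ (fun m : M => d ((n : G) * m))) := by
              congr 1
              funext n
              congr 1
              funext m
              have hmm : φ ((n : G) * m) = φ n * φ m :=
                hmul n (hNA n n.2) m (hMA m m.2) (hNMA n n.2 m m.2)
              simp [hd, hmm, mul_assoc]
            _ = σ (τ d) 1 := by
              rw [hσ]
              congr 1
              funext n
              rw [hτ]
              congr 1
              funext m
              simp [mul_assoc]
            _ = d 1 := hσταid
            _ = x f := by simp [hd, hφ1]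
    -- S is surjective, hence injective (f.g. module over a commutative ring)
    haveI : Module.Finite R (F → A) := Module.Finite.pi
    have hSsurj : Function.Surjective S := fun x => ⟨T x, hST x⟩
    have hSinj : Function.Injective S :=
      OrzechProperty.injective_of_surjective_endomorphism S hSsurj
    have hTS : ∀ x : F → A, T (S x) = x := by
      intro x
      apply hSinj
      exact hST (S x)
    -- transfer back
    set x : F → A := fun f => if hf : ∃ a, a ∈ A₀ ∧ φ a = f then c hf.choose else 0 with hx
    have hxφ : ∀ a ∈ A₀, x (φ a) = c a := by
      intro a ha
      have hex : ∃ b, b ∈ A₀ ∧ φ b = φ a := ⟨a, ha, rfl⟩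
      rw [hx]
      simp only [hex, dif_pos]
      have h1 := hex.choose_spec
      have : hex.choose = a := hinj h1.1 ha h1.2
      rw [this]
    have hTS1 : T (S x) 1 = x 1 := by rw [hTS]
    calc τ (σ c) 1 = μ (fun m : M => η (fun n : N => c ((m : G) * n))) := by
          rw [hτ]
          congr 1
          funext m
          rw [hσ]
          congr 1
          funext n
          simp
        _ = T (S x) 1 := by
          rw [hTapp]
          congr 1
          funext m
          rw [hSapp]
          congr 1
          funext n
          have hmm : φ ((m : G) * n) = φ m * φ n :=
            hmul m (hMA m m.2) n (hNA n n.2) (hMNA m m.2 n n.2)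
          rw [one_mul, ← hmm, hxφ _ (hMNA m m.2 n n.2)]
        _ = x 1 := hTS1
        _ = c 1 := by rw [← hφ1, hxφ 1 h1A]
  -- conclude by equivariance
  funext c g
  simp only [Function.comp_apply, id_eq]
  have hkey := key (fun h => c (g * h))
  have hσshift : σ (fun h => c (g * h)) = fun h => σ c (g * h) := by
    funext k
    rw [hσ, hσ]
    congr 1
    funext n
    rw [mul_assoc]
  rw [hσshift] at hkey
  have : τ (fun h => σ c (g * h)) 1 = τ (σ c) g := by
    rw [hτ, hτ]
    congr 1
    funext m
    rw [one_mul]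
  rw [this] at hkey
  simpa using hkey
end
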